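/- Let ε > 0, δ > 0 and q ≥ 1 an integer, and let f₁, …, f_q : ℝ → ℝ be continuously differentiable functions with f_i'(y) > 0 for all y ∈ ℝ. Let z₀ ∈ ℝ, and set z_i = f_i(z_{i−1}) and λ_i = log f_i'(z_{i−1}) for 1 ≤ i ≤ q. Assume: (i) for each i ∈ {1,…,q} and every y ∈ ℝ with |y − z_{i−1}| ≤ δ one has |log f_i'(y) − λ_i| ≤ ε; and (ii) for every j with 1 ≤ j ≤ q one has λ₁ + ⋯ + λ_j + j·ε < 0. Then for every j with 1 ≤ j ≤ q, the composition F_j = f_j ∘ ⋯ ∘ f₁ satisfies, for every y ∈ [z₀ − δ, z₀ + δ]: |F_j(y) − z_j| ≤ δ and exp(λ₁ + ⋯ + λ_j − jε) ≤ F_j'(y) ≤ exp(λ₁ + ⋯ + λ_j + jε). In particular, the image F_q([z₀ − δ, z₀ + δ]) is an interval of length at most 2δ·exp(λ₁ + ⋯ + λ_q + qε). -/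

import Mathlib

/-!
By induction on `j`, `log F_j'` stays within `jε` of `λ₁ + ⋯ + λ_j` on the whole interval
`[z₀ - δ, z₀ + δ]`. The chain rule gives `log F_{j+1}' = log f_{j+1}' ∘ F_j + log F_j'`, and the
first term is `ε`-close to `λ_{j+1}` because `F_j` maps the interval into the `δ`-neighbourhood
of `z_j`. That last fact is the mean value theorem: on the interval
`F_j' ≤ exp(λ₁ + ⋯ + λ_j + jε) ≤ 1`, so `F_j` does not expand distances to `z₀`. The same
estimate for `F_q` bounds the length of the final image.
-/

open MeasureTheory

/-- `compFrom f i k = f_{i+k-1} ∘ ⋯ ∘ f_{i+1} ∘ f_i` is the composition of the `k`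
consecutive maps starting at index `i` (the empty composition being the identity). -/
def compFrom (f : ℕ → ℝ → ℝ) (i : ℕ) : ℕ → ℝ → ℝ
  | 0 => id
  | k + 1 => f (i + k) ∘ compFrom f i k

open Metric Set

theorem compFrom_one_succ (f : ℕ → ℝ → ℝ) (k : ℕ) :
    compFrom f 1 (k + 1) = f (k + 1) ∘ compFrom f 1 k := by
  rw [compFrom, Nat.add_comm]

theorem differentiable_compFrom {f : ℕ → ℝ → ℝ} {i n : ℕ}
    (hf : ∀ k < n, Differentiable ℝ (f (i + k))) : Differentiable ℝ (compFrom f i n) := by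
  induction n with
  | zero => exact differentiable_id
  | succ n ih => exact (hf n n.lt_succ_self).comp (ih fun k hk => hf k (hk.trans n.lt_succ_self))

theorem deriv_compFrom_one_succ {f : ℕ → ℝ → ℝ} {k : ℕ} {y : ℝ}
    (hf : DifferentiableAt ℝ (f (k + 1)) (compFrom f 1 k y))
    (hF : DifferentiableAt ℝ (compFrom f 1 k) y) :
    deriv (compFrom f 1 (k + 1)) y =
      deriv (f (k + 1)) (compFrom f 1 k y) * deriv (compFrom f 1 k) y := by
  rw [compFrom_one_succ]
  exact deriv_comp y hf hF

theorem mem_Icc_exp_of_abs_log_sub_le {x a e : ℝ} (hx : 0 < x) (h : |Real.log x - a| ≤ e) :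
    x ∈ Icc (Real.exp (a - e)) (Real.exp (a + e)) := by
  rw [abs_sub_le_iff] at h
  rw [← Real.exp_log hx]
  exact ⟨Real.exp_le_exp.mpr (by linarith), Real.exp_le_exp.mpr (by linarith)⟩

theorem mapsTo_closedBall_of_abs_log_deriv_sub_le {g : ℝ → ℝ} {c r a e : ℝ}
    (hg : Differentiable ℝ g)
    (h : ∀ x ∈ closedBall c r, 0 < deriv g x ∧ |Real.log (deriv g x) - a| ≤ e) :
    MapsTo g (closedBall c r) (closedBall (g c) (Real.exp (a + e) * r)) := by
  intro y hy
  have hc : c ∈ closedBall c r := mem_closedBall_self (dist_nonneg.trans (mem_closedBall'.mp hy))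
  have hbound : ∀ x ∈ closedBall c r, ‖deriv g x‖ ≤ Real.exp (a + e) := fun x hx => by
    rw [Real.norm_of_nonneg (h x hx).1.le]
    exact (mem_Icc_exp_of_abs_log_sub_le (h x hx).1 (h x hx).2).2
  rw [mem_closedBall, dist_eq_norm]
  calc ‖g y - g c‖ ≤ Real.exp (a + e) * ‖y - c‖ :=
        (convex_closedBall c r).norm_image_sub_le_of_norm_deriv_le (fun x _ => hg x) hbound hc hy
    _ ≤ Real.exp (a + e) * r :=
        mul_le_mul_of_nonneg_left (mem_closedBall_iff_norm.mp hy) (Real.exp_pos _).le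

/-- `λ₁ + ⋯ + λ_j`, where `λ_i = log f_i'(z_{i-1})` along the orbit `z_i = (f_i ∘ ⋯ ∘ f₁)(z₀)`. -/
noncomputable def partialExponentSum (f : ℕ → ℝ → ℝ) (z₀ : ℝ) (j : ℕ) : ℝ :=
  ∑ i ∈ Finset.Icc 1 j, Real.log (deriv (f i) (compFrom f 1 (i - 1) z₀))

@[simp]
theorem partialExponentSum_zero (f : ℕ → ℝ → ℝ) (z₀ : ℝ) : partialExponentSum f z₀ 0 = 0 := by
  simp [partialExponentSum]

theorem partialExponentSum_succ (f : ℕ → ℝ → ℝ) (z₀ : ℝ) (j : ℕ) :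
    partialExponentSum f z₀ (j + 1) =
      partialExponentSum f z₀ j + Real.log (deriv (f (j + 1)) (compFrom f 1 j z₀)) :=
  Finset.sum_Icc_succ_top (Nat.le_add_left 1 j) _

section Composition

variable {f : ℕ → ℝ → ℝ} {q j : ℕ} {ε δ z₀ : ℝ}

theorem partialExponentSum_add_nonpos
    (hneg : ∀ j : ℕ, 1 ≤ j → j ≤ q → partialExponentSum f z₀ j + (j : ℝ) * ε < 0)
    (hj : j ≤ q) : partialExponentSum f z₀ j + (j : ℝ) * ε ≤ 0 := by
  rcases Nat.eq_zero_or_pos j with rfl | hj0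
  · simp
  · exact (hneg j hj0 hj).le

theorem differentiable_compFrom_one (hdiff : ∀ i : ℕ, 1 ≤ i → i ≤ q → Differentiable ℝ (f i))
    (hj : j ≤ q) : Differentiable ℝ (compFrom f 1 j) :=
  differentiable_compFrom fun k hk => hdiff (1 + k) (by omega) (by omega)

theorem abs_compFrom_sub_le (hdiff : ∀ i : ℕ, 1 ≤ i → i ≤ q → Differentiable ℝ (f i))
    (hneg : ∀ j : ℕ, 1 ≤ j → j ≤ q → partialExponentSum f z₀ j + (j : ℝ) * ε < 0)
    (hj : j ≤ q)
    (hlog : ∀ y ∈ closedBall z₀ δ, 0 < deriv (compFrom f 1 j) y ∧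
      |Real.log (deriv (compFrom f 1 j) y) - partialExponentSum f z₀ j| ≤ j * ε)
    {y : ℝ} (hy : y ∈ closedBall z₀ δ) :
    |compFrom f 1 j y - compFrom f 1 j z₀| ≤ δ := by
  have hmaps := mapsTo_closedBall_of_abs_log_deriv_sub_le
    (differentiable_compFrom_one hdiff hj) hlog hy
  have hexp : Real.exp (partialExponentSum f z₀ j + j * ε) ≤ 1 :=
    Real.exp_le_one_iff.mpr (partialExponentSum_add_nonpos hneg hj)
  rw [mem_closedBall, Real.dist_eq] at hmaps
  exact hmaps.trans (mul_le_of_le_one_left (dist_nonneg.trans (mem_closedBall.mp hy)) hexp)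

theorem abs_log_deriv_compFrom_succ_sub_le
    (hdiff : ∀ i : ℕ, 1 ≤ i → i ≤ q → Differentiable ℝ (f i))
    (hpos : ∀ i : ℕ, 1 ≤ i → i ≤ q → ∀ y : ℝ, 0 < deriv (f i) y)
    (hcontrol : ∀ i : ℕ, 1 ≤ i → i ≤ q → ∀ y : ℝ,
      |y - compFrom f 1 (i - 1) z₀| ≤ δ →
      |Real.log (deriv (f i) y) - Real.log (deriv (f i) (compFrom f 1 (i - 1) z₀))| ≤ ε)
    (hj : j + 1 ≤ q) {y : ℝ}
    (hF : 0 < deriv (compFrom f 1 j) y ∧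
      |Real.log (deriv (compFrom f 1 j) y) - partialExponentSum f z₀ j| ≤ j * ε)
    (hclose : |compFrom f 1 j y - compFrom f 1 j z₀| ≤ δ) :
    0 < deriv (compFrom f 1 (j + 1)) y ∧
      |Real.log (deriv (compFrom f 1 (j + 1)) y) - partialExponentSum f z₀ (j + 1)| ≤
        ((j + 1 : ℕ) : ℝ) * ε := by
  have hf := hpos (j + 1) (by omega) hj (compFrom f 1 j y)
  have hstep := hcontrol (j + 1) (by omega) hj _ hclose
  rw [deriv_compFrom_one_succ (hdiff (j + 1) (by omega) hj _)
    (differentiable_compFrom_one hdiff (by omega) y), partialExponentSum_succ]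
  refine ⟨mul_pos hf hF.1, ?_⟩
  rw [Real.log_mul hf.ne' hF.1.ne', add_comm (Real.log _), add_sub_add_comm, Nat.cast_succ,
    add_one_mul]
  exact (abs_add_le _ _).trans (add_le_add hF.2 hstep)

theorem abs_log_deriv_compFrom_sub_le
    (hdiff : ∀ i : ℕ, 1 ≤ i → i ≤ q → Differentiable ℝ (f i))
    (hpos : ∀ i : ℕ, 1 ≤ i → i ≤ q → ∀ y : ℝ, 0 < deriv (f i) y)
    (hcontrol : ∀ i : ℕ, 1 ≤ i → i ≤ q → ∀ y : ℝ,
      |y - compFrom f 1 (i - 1) z₀| ≤ δ →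
      |Real.log (deriv (f i) y) - Real.log (deriv (f i) (compFrom f 1 (i - 1) z₀))| ≤ ε)
    (hneg : ∀ j : ℕ, 1 ≤ j → j ≤ q → partialExponentSum f z₀ j + (j : ℝ) * ε < 0)
    (hj : j ≤ q) :
    ∀ y ∈ closedBall z₀ δ, 0 < deriv (compFrom f 1 j) y ∧
      |Real.log (deriv (compFrom f 1 j) y) - partialExponentSum f z₀ j| ≤ j * ε := by
  induction j with
  | zero => intro y _; simp [compFrom]
  | succ j ih =>
    have ih := ih (by omega)
    intro y hy
    exact abs_log_deriv_compFrom_succ_sub_le hdiff hpos hcontrol hj (ih y hy)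
      (abs_compFrom_sub_le hdiff hneg (by omega) ih hy)

end Composition

theorem composition_contraction_control_general
    (ε δ : ℝ) (q : ℕ)
    (f : ℕ → ℝ → ℝ)
    (hC1 : ∀ i : ℕ, 1 ≤ i → i ≤ q → ContDiff ℝ 1 (f i))
    (hpos : ∀ i : ℕ, 1 ≤ i → i ≤ q → ∀ y : ℝ, 0 < deriv (f i) y)
    (z₀ : ℝ)
    (hcontrol : ∀ i : ℕ, 1 ≤ i → i ≤ q → ∀ y : ℝ,
      |y - compFrom f 1 (i - 1) z₀| ≤ δ →
      |Real.log (deriv (f i) y) -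
        Real.log (deriv (f i) (compFrom f 1 (i - 1) z₀))| ≤ ε)
    (hneg : ∀ j : ℕ, 1 ≤ j → j ≤ q →
      (∑ i ∈ Finset.Icc 1 j, Real.log (deriv (f i) (compFrom f 1 (i - 1) z₀))) +
        (j : ℝ) * ε < 0) :
    (∀ j : ℕ, 1 ≤ j → j ≤ q → ∀ y ∈ Set.Icc (z₀ - δ) (z₀ + δ),
      |compFrom f 1 j y - compFrom f 1 j z₀| ≤ δ ∧
      Real.exp ((∑ i ∈ Finset.Icc 1 j,
          Real.log (deriv (f i) (compFrom f 1 (i - 1) z₀))) - (j : ℝ) * ε) ≤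
        deriv (compFrom f 1 j) y ∧
      deriv (compFrom f 1 j) y ≤
        Real.exp ((∑ i ∈ Finset.Icc 1 j,
          Real.log (deriv (f i) (compFrom f 1 (i - 1) z₀))) + (j : ℝ) * ε)) ∧
    volume (compFrom f 1 q '' Set.Icc (z₀ - δ) (z₀ + δ)) ≤
      ENNReal.ofReal (2 * δ * Real.exp ((∑ i ∈ Finset.Icc 1 q,
        Real.log (deriv (f i) (compFrom f 1 (i - 1) z₀))) + (q : ℝ) * ε)) := by
  have hdiff : ∀ i : ℕ, 1 ≤ i → i ≤ q → Differentiable ℝ (f i) := fun i h1 h2 =>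
    (hC1 i h1 h2).differentiable one_ne_zero
  have hlog {j : ℕ} (hj : j ≤ q) := abs_log_deriv_compFrom_sub_le hdiff hpos hcontrol hneg hj
  rw [← Real.closedBall_eq_Icc]
  refine ⟨fun j _ hj y hy => ?_, ?_⟩
  · exact ⟨abs_compFrom_sub_le hdiff hneg hj (hlog hj) hy,
      mem_Icc_exp_of_abs_log_sub_le (hlog hj y hy).1 (hlog hj y hy).2⟩
  · calc volume (compFrom f 1 q '' closedBall z₀ δ)
        ≤ volume (closedBall (compFrom f 1 q z₀)
            (Real.exp (partialExponentSum f z₀ q + q * ε) * δ)) :=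
          measure_mono (mapsTo_closedBall_of_abs_log_deriv_sub_le
            (differentiable_compFrom_one hdiff le_rfl) (hlog le_rfl)).image_subset
      _ = _ := by rw [Real.volume_closedBall, partialExponentSum, mul_comm _ δ, mul_assoc]

/-- Composition-control lemma: a composition of maps whose logarithmic derivatives are
`ε`-controlled on `δ`-neighborhoods of the orbit `z_i = (f_i ∘ ⋯ ∘ f₁)(z₀)`, with
uniformly negative partial exponent sums `λ₁ + ⋯ + λ_j + jε < 0` where
`λ_i = log f_i'(z_{i-1})`, stays `δ`-close to the orbit on `[z₀-δ, z₀+δ]` with two-sided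
exponential derivative bounds; in particular the image of `[z₀-δ, z₀+δ]` under the full
composition has length at most `2δ·exp(λ₁+⋯+λ_q+qε)`. -/
theorem composition_contraction_control
    (ε δ : ℝ) (hε : 0 < ε) (hδ : 0 < δ) (q : ℕ) (hq : 1 ≤ q)
    (f : ℕ → ℝ → ℝ)
    (hC1 : ∀ i : ℕ, 1 ≤ i → i ≤ q → ContDiff ℝ 1 (f i))
    (hpos : ∀ i : ℕ, 1 ≤ i → i ≤ q → ∀ y : ℝ, 0 < deriv (f i) y)
    (z₀ : ℝ)
    (hcontrol : ∀ i : ℕ, 1 ≤ i → i ≤ q → ∀ y : ℝ,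
      |y - compFrom f 1 (i - 1) z₀| ≤ δ →
      |Real.log (deriv (f i) y) -
        Real.log (deriv (f i) (compFrom f 1 (i - 1) z₀))| ≤ ε)
    (hneg : ∀ j : ℕ, 1 ≤ j → j ≤ q →
      (∑ i ∈ Finset.Icc 1 j, Real.log (deriv (f i) (compFrom f 1 (i - 1) z₀))) +
        (j : ℝ) * ε < 0) :
    (∀ j : ℕ, 1 ≤ j → j ≤ q → ∀ y ∈ Set.Icc (z₀ - δ) (z₀ + δ),
      |compFrom f 1 j y - compFrom f 1 j z₀| ≤ δ ∧
      Real.exp ((∑ i ∈ Finset.Icc 1 j,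
          Real.log (deriv (f i) (compFrom f 1 (i - 1) z₀))) - (j : ℝ) * ε) ≤
        deriv (compFrom f 1 j) y ∧
      deriv (compFrom f 1 j) y ≤
        Real.exp ((∑ i ∈ Finset.Icc 1 j,
          Real.log (deriv (f i) (compFrom f 1 (i - 1) z₀))) + (j : ℝ) * ε)) ∧
    volume (compFrom f 1 q '' Set.Icc (z₀ - δ) (z₀ + δ)) ≤
      ENNReal.ofReal (2 * δ * Real.exp ((∑ i ∈ Finset.Icc 1 q,
        Real.log (deriv (f i) (compFrom f 1 (i - 1) z₀))) + (q : ℝ) * ε)) :=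
  composition_contraction_control_general ε δ q f hC1 hpos z₀ hcontrol hneg
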